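/- Let X be a special abstract rank one group with abelian unipotent subgroups A and B, and H = N_X(A) ∩ N_X(B). If [A,H] = 1, then |A| ≤ 3. -/

import Mathlib

/-- Conjugate `S ^ g = g⁻¹ S g` of a subgroup. -/
def conjSub {X : Type*} [Group X] (S : Subgroup X) (g : X) : Subgroup X :=
  S.map ((MulAut.conj g⁻¹).toMonoidHom)

/-!
Every element of `H` centralizes `A` by hypothesis, and centralizes `B` because `b(a)` is
determined by `a`; as `X = ⟨A, B⟩`, `H` is central. For `a ≠ 1` in `A` both `a⁻¹ b(a) a⁻¹` and
`b(a)⁻¹ a b(a)⁻¹` interchange `A` and `B` (the second one because `b(a⁻¹) = b(a)⁻¹`), and two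
elements interchanging `A` and `B` differ by an element of `H`. So in `X / Z(X)` all of them map
to one involution `s`, and `(s x)³ = 1` for the image `x` of every `a ≠ 1` in `A`. For commuting
`x, y` these relations at `x, y, xy, x⁻¹y` force `s = y³`, which would put an element
interchanging `A` and `B` into `A Z(X) ≤ N_X(A)`. Hence `A = {1, a, a⁻¹}`.
-/

open Subgroup

section ConjSub
variable {X : Type*} [Group X] {S T : Subgroup X} {g h y : X}

lemma mem_conjSub : y ∈ conjSub S g ↔ g * y * g⁻¹ ∈ S := by
  rw [conjSub, mem_map_equiv]
  simp [mul_assoc]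

lemma conjSub_mul (S : Subgroup X) (g h : X) :
    conjSub S (g * h) = conjSub (conjSub S g) h := by
  ext y
  simp only [mem_conjSub, mul_inv_rev, mul_assoc]

lemma conjSub_one (S : Subgroup X) : conjSub S 1 = S := by
  ext y
  simp [mem_conjSub]

lemma conjSub_eq_self_iff : conjSub S g = S ↔ g ∈ normalizer (S : Set X) := by
  rw [mem_normalizer_iff, SetLike.ext_iff]
  exact forall_congr' fun y => by rw [mem_conjSub]; exact Iff.comm

lemma conjSub_inv_of_conjSub_eq (hST : conjSub S g = T) : conjSub T g⁻¹ = S := by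
  rw [← hST, ← conjSub_mul, mul_inv_cancel, conjSub_one]

lemma conjSub_conj_of_mem_normalizer (hh : h ∈ normalizer (S : Set X)) (g : X) :
    conjSub S (h⁻¹ * g * h) = conjSub (conjSub S g) h := by
  rw [conjSub_mul, conjSub_mul, conjSub_eq_self_iff.mpr (inv_mem hh)]

end ConjSub

section Interchanges
variable {X : Type*} [Group X] {A B : Subgroup X} {a b g g' : X}

def Interchanges (A B : Subgroup X) (g : X) : Prop :=
  conjSub A g = B ∧ conjSub B g = A

lemma Interchanges.symm (hg : Interchanges A B g) : Interchanges B A g :=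
  ⟨hg.2, hg.1⟩

lemma Interchanges.mul_inv_mem (hg : Interchanges A B g) (hg' : Interchanges A B g') :
    g * g'⁻¹ ∈ normalizer (A : Set X) ⊓ normalizer (B : Set X) := by
  refine ⟨conjSub_eq_self_iff.mp ?_, conjSub_eq_self_iff.mp ?_⟩
  · rw [conjSub_mul, hg.1, conjSub_inv_of_conjSub_eq hg'.1]
  · rw [conjSub_mul, hg.2, conjSub_inv_of_conjSub_eq hg'.2]

lemma Interchanges.mul_self_mem (hg : Interchanges A B g) :
    g * g ∈ normalizer (A : Set X) ⊓ normalizer (B : Set X) := by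
  simpa using hg.mul_inv_mem (g' := g⁻¹)
    ⟨conjSub_inv_of_conjSub_eq hg.2, conjSub_inv_of_conjSub_eq hg.1⟩

lemma Interchanges.not_mem_normalizer (hAB : A ≠ B) (hg : Interchanges A B g) :
    g ∉ normalizer (A : Set X) := fun hgA =>
  hAB ((conjSub_eq_self_iff.mpr hgA).symm.trans hg.1)

lemma interchanges_inv_mul_mul_inv (ha : a ∈ A) (h₁ : conjSub A b = conjSub B a)
    (h₂ : conjSub A b⁻¹ = conjSub B a⁻¹) : Interchanges A B (a⁻¹ * b * a⁻¹) := by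
  have haA : conjSub A a⁻¹ = A := conjSub_eq_self_iff.mpr (le_normalizer (inv_mem ha))
  constructor
  · rw [conjSub_mul, conjSub_mul, haA, h₁, ← conjSub_mul, mul_inv_cancel, conjSub_one]
  · rw [conjSub_mul, conjSub_mul, ← h₂, ← conjSub_mul A b⁻¹, inv_mul_cancel, conjSub_one, haA]

end Interchanges

section InvolutionRelations
variable {G : Type*} [Group G] {s x y β : G}

lemma mul_pow_three_eq_one_of_inv_mul_mul_inv (h₁ : x⁻¹ * β * x⁻¹ = s)
    (h₂ : β⁻¹ * x * β⁻¹ = s) : (s * x) ^ 3 = 1 := by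
  obtain rfl : β = x * s * x := by rw [← h₁]; group
  calc (s * x) ^ 3 = s * ((x * s * x)⁻¹ * x * (x * s * x)⁻¹)⁻¹ := by rw [pow_three]; group
    _ = 1 := by rw [h₂, mul_inv_cancel]

lemma conj_eq_of_pow_three (hs : s * s = 1) (h : (s * x) ^ 3 = 1) :
    s * x * s = x⁻¹ * s * x⁻¹ := by
  have hsi : s⁻¹ = s := inv_eq_of_mul_eq_one_right hs
  calc s * x * s = (s * x) ^ 3 * (x⁻¹ * s⁻¹ * x⁻¹) := by rw [pow_three]; group
    _ = x⁻¹ * s * x⁻¹ := by rw [h, hsi, one_mul]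

lemma conj_mul_eq_of_pow_three (hs : s * s = 1) (hc : Commute x y)
    (hx : (s * x) ^ 3 = 1) (hy : (s * y) ^ 3 = 1) (hxy : (s * (x * y)) ^ 3 = 1) :
    s * (x * y) * s = x * s * y := by
  have hsi : s⁻¹ = s := inv_eq_of_mul_eq_one_right hs
  have hsplit : s * (x * y) * s = (s * x * s) * (s * y * s) := by
    calc _ = s * x * (s * s) * y * s := by rw [hs]; group
      _ = _ := by group
  have h := conj_eq_of_pow_three hs hxy
  rw [hsplit, conj_eq_of_pow_three hs hx, conj_eq_of_pow_three hs hy, mul_inv_rev,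
    ← hc.inv_inv.eq] at h
  calc s * (x * y) * s = (s⁻¹ * x⁻¹ * y⁻¹ * s⁻¹)⁻¹ := by rw [hc.eq]; group
    _ = (x * (x⁻¹ * s * x⁻¹ * (y⁻¹ * s * y⁻¹)) * y)⁻¹ := by rw [hsi]; group
    _ = x * s⁻¹ * y := by rw [h]; group
    _ = x * s * y := by rw [hsi]

lemma conj_inv_mul_eq_of_pow_three (hs : s * s = 1) (hc : Commute x y)
    (hx : (s * x) ^ 3 = 1) (hy : (s * y) ^ 3 = 1) (hxy : (s * (x * y)) ^ 3 = 1) :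
    s * (x⁻¹ * y) * s = x * x * y := by
  have hsi : s⁻¹ = s := inv_eq_of_mul_eq_one_right hs
  have hys : s * x * s * y = x * y * s := by
    calc s * x * s * y = s⁻¹ * (x * s * y) := by rw [hsi]; group
      _ = s⁻¹ * (s * (x * y) * s) := by rw [conj_mul_eq_of_pow_three hs hc hx hy hxy]
      _ = x * y * s := by group
  calc s * (x⁻¹ * y) * s = x * (x⁻¹ * s * x⁻¹) * y * s := by group
    _ = x * (s * x * s * y) * s := by rw [← conj_eq_of_pow_three hs hx]; group
    _ = x * x * y * (s * s) := by rw [hys]; group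
    _ = x * x * y := by rw [hs, mul_one]

lemma eq_pow_three_of_pow_three (hs : s * s = 1) (hc : Commute x y)
    (hx : (s * x) ^ 3 = 1) (hy : (s * y) ^ 3 = 1) (hxy : (s * (x * y)) ^ 3 = 1)
    (hxy' : (s * (x⁻¹ * y)) ^ 3 = 1) : s = y ^ 3 := by
  have h := conj_eq_of_pow_three hs hxy'
  rw [conj_inv_mul_eq_of_pow_three hs hc hx hy hxy] at h
  calc s = (x⁻¹ * y) * ((x⁻¹ * y)⁻¹ * s * (x⁻¹ * y)⁻¹) * (x⁻¹ * y) := by group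
    _ = x⁻¹ * (y * x) * x * y * x⁻¹ * y := by rw [← h]; group
    _ = y * (x * y * x⁻¹) * y := by rw [← hc.eq]; group
    _ = y ^ 3 := by rw [hc.eq, mul_inv_cancel_right, pow_three, mul_assoc]

end InvolutionRelations

lemma Cardinal.mk_le_three_of_subset {α : Type*} {s : Set α} {x y z : α} (h : s ⊆ {x, y, z}) :
    Cardinal.mk s ≤ 3 := by
  classical
  refine (Cardinal.mk_le_mk_of_subset h).trans ?_
  simp only [Cardinal.mk_fintype, Fintype.card_ofFinset, Set.toFinset_insert,
    Set.toFinset_singleton, Nat.cast_le_ofNat]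
  exact Finset.card_le_three

section SpecialRankOne
variable {X : Type*} [Group X] {A B : Subgroup X}

lemma commute_of_conjSub_eq_of_unique {a b h : X}
    (hh : h ∈ normalizer (A : Set X) ⊓ normalizer (B : Set X)) (hha : Commute h a)
    (hb : b ∈ B) (hb1 : b ≠ 1) (hab : conjSub A b = conjSub B a)
    (huniq : ∀ b' ∈ B, b' ≠ 1 → conjSub A b' = conjSub B a → b' = b) : Commute h b := by
  have hbB : h⁻¹ * b * h ∈ B := by
    simpa using (mem_normalizer_iff.mp (inv_mem hh.2) b).mp hb
  have hb1' : h⁻¹ * b * h ≠ 1 := by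
    rwa [ne_eq, ← conj_eq_one_iff (a := h⁻¹), inv_inv] at hb1
  have hconj : conjSub A (h⁻¹ * b * h) = conjSub B a := by
    rw [conjSub_conj_of_mem_normalizer hh.1, hab, ← conjSub_mul, ← hha.eq, conjSub_mul,
      conjSub_eq_self_iff.mpr hh.2]
  have hfix := huniq _ hbB hb1' hconj
  calc h * b = h * (h⁻¹ * b * h) := by rw [hfix]
    _ = b * h := by group

lemma normalizer_inf_le_center (hgen : A ⊔ B = ⊤)
    (hba : ∀ b ∈ B, b ≠ 1 → ∃ a ∈ A, a ≠ 1 ∧ conjSub B a = conjSub A b) {bf : X → X}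
    (hbfu : ∀ a ∈ A, a ≠ 1 → ∀ b ∈ B, b ≠ 1 → conjSub A b = conjSub B a → b = bf a)
    (hcomm : ⁅A, normalizer (A : Set X) ⊓ normalizer (B : Set X)⁆ = ⊥) :
    normalizer (A : Set X) ⊓ normalizer (B : Set X) ≤ center X := by
  set H := normalizer (A : Set X) ⊓ normalizer (B : Set X)
  have hA : A ≤ centralizer (H : Set X) := commutator_eq_bot_iff_le_centralizer.mp hcomm
  have hB : B ≤ centralizer (H : Set X) := by
    intro b hb h hh
    by_cases hb1 : b = 1
    · simp [hb1]
    obtain ⟨a, ha, ha1, hab⟩ := hba b hb hb1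
    refine (commute_of_conjSub_eq_of_unique hh (hA ha h hh) hb hb1 hab.symm
      fun b' hb' hb'1 h' => ?_).eq
    exact (hbfu a ha ha1 b' hb' hb'1 h').trans (hbfu a ha ha1 b hb hb1 hab.symm).symm
  have htop : (⊤ : Subgroup X) ≤ centralizer (H : Set X) := hgen ▸ sup_le hA hB
  rw [← le_centralizer_iff, coe_top, centralizer_univ] at htop
  exact htop

lemma eq_or_eq_inv_of_normalizer_inf_le_center (hAB : A ≠ B) [IsMulCommutative A]
    {bf : X → X}
    (hbf : ∀ a ∈ A, a ≠ 1 → bf a ∈ B ∧ bf a ≠ 1 ∧ conjSub A (bf a) = conjSub B a)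
    (hspecial : ∀ a ∈ A, a ≠ 1 → bf a⁻¹ = (bf a)⁻¹)
    (hH : normalizer (A : Set X) ⊓ normalizer (B : Set X) ≤ center X)
    {a c : X} (ha : a ∈ A) (ha1 : a ≠ 1) (hc : c ∈ A) (hc1 : c ≠ 1) : c = a ∨ c = a⁻¹ := by
  have hswap : ∀ d ∈ A, d ≠ 1 → Interchanges A B (d⁻¹ * bf d * d⁻¹) ∧
      Interchanges A B ((bf d)⁻¹ * d * (bf d)⁻¹) := by
    intro d hd hd1
    obtain ⟨hbd, -, hbdc⟩ := hbf d hd hd1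
    have hbdc' : conjSub A (bf d)⁻¹ = conjSub B d⁻¹ := by
      rw [← hspecial d hd hd1]; exact (hbf d⁻¹ (inv_mem hd) (inv_ne_one.mpr hd1)).2.2
    exact ⟨interchanges_inv_mul_mul_inv hd hbdc hbdc',
      (interchanges_inv_mul_mul_inv hbd hbdc.symm hbdc'.symm).symm⟩
  set n := a⁻¹ * bf a * a⁻¹
  have hn : Interchanges A B n := (hswap a ha ha1).1
  let π := QuotientGroup.mk' (center X)
  have hπ : ∀ g, Interchanges A B g → π g = π n := fun g hg =>
    QuotientGroup.eq_iff_div_mem.mpr (hH (div_eq_mul_inv g n ▸ hg.mul_inv_mem hn))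
  have hs : π n * π n = 1 := by
    rw [← map_mul]; exact (QuotientGroup.eq_one_iff _).mpr (hH hn.mul_self_mem)
  have hcube : ∀ d ∈ A, d ≠ 1 → (π n * π d) ^ 3 = 1 := by
    intro d hd hd1
    refine mul_pow_three_eq_one_of_inv_mul_mul_inv (β := π (bf d)) ?_ ?_
    · rw [← hπ _ (hswap d hd hd1).1]; simp only [map_mul, map_inv]
    · rw [← hπ _ (hswap d hd hd1).2]; simp only [map_mul, map_inv]
  by_contra! hne
  have hac : a * c ≠ 1 := fun h => hne.2 (eq_inv_of_mul_eq_one_right h)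
  have hac' : a⁻¹ * c ≠ 1 := fun h => hne.1 (inv_mul_eq_one.mp h).symm
  have hsc : π n = π (c ^ 3) := by
    have := eq_pow_three_of_pow_three hs
      (Commute.map (setLike_mul_comm ha hc) π) (hcube a ha ha1)
      (hcube c hc hc1) (by simpa using hcube _ (mul_mem ha hc) hac)
      (by simpa using hcube _ (mul_mem (inv_mem ha) hc) hac')
    rwa [← map_pow] at this
  apply hn.not_mem_normalizer hAB
  have hz : n / c ^ 3 ∈ center X := QuotientGroup.eq_iff_div_mem.mp hsc
  simpa using mul_mem (center_le_normalizer _ hz) (le_normalizer (pow_mem hc 3))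

end SpecialRankOne

theorem stmt7_general
    {X : Type*} [Group X] (A B : Subgroup X) (hAB : A ≠ B)
    (hAcomm : IsMulCommutative A)
    (hgen : A ⊔ B = ⊤)
    (hba : ∀ b ∈ B, b ≠ 1 → ∃ a ∈ A, a ≠ 1 ∧ conjSub B a = conjSub A b)
    (bf : X → X)
    (hbf : ∀ a ∈ A, a ≠ 1 → bf a ∈ B ∧ bf a ≠ 1 ∧ conjSub A (bf a) = conjSub B a)
    (hbfu : ∀ a ∈ A, a ≠ 1 → ∀ b ∈ B, b ≠ 1 → conjSub A b = conjSub B a → b = bf a)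
    (hspecial : ∀ a ∈ A, a ≠ 1 → bf a⁻¹ = (bf a)⁻¹)
    (hcomm : ⁅A, Subgroup.normalizer (A : Set X) ⊓ Subgroup.normalizer (B : Set X)⁆ = ⊥) :
    Cardinal.mk A ≤ 3 := by
  have hH := normalizer_inf_le_center hgen hba hbfu hcomm
  obtain rfl | ⟨a, ha, ha1⟩ := A.bot_or_exists_ne_one
  · simp
  refine Cardinal.mk_le_three_of_subset (x := 1) (y := a) (z := a⁻¹) fun c hc => ?_
  by_cases hc1 : c = 1
  · simp [hc1]
  rcases eq_or_eq_inv_of_normalizer_inf_le_center hAB hbf hspecial hH ha ha1 hc hc1 with rfl | rfl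
    <;> simp

theorem stmt7
    {X : Type*} [Group X] (A B : Subgroup X) (hAB : A ≠ B)
    (hAcomm : IsMulCommutative A) (hBcomm : IsMulCommutative B)
    (hgen : A ⊔ B = ⊤)
    (hab : ∀ a ∈ A, a ≠ 1 → ∃ b ∈ B, b ≠ 1 ∧ conjSub A b = conjSub B a)
    (hba : ∀ b ∈ B, b ≠ 1 → ∃ a ∈ A, a ≠ 1 ∧ conjSub B a = conjSub A b)
    (bf : X → X)
    (hbf : ∀ a ∈ A, a ≠ 1 → bf a ∈ B ∧ bf a ≠ 1 ∧ conjSub A (bf a) = conjSub B a)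
    (hbfu : ∀ a ∈ A, a ≠ 1 → ∀ b ∈ B, b ≠ 1 → conjSub A b = conjSub B a → b = bf a)
    (hspecial : ∀ a ∈ A, a ≠ 1 → bf a⁻¹ = (bf a)⁻¹)
    (hcomm : ⁅A, Subgroup.normalizer (A : Set X) ⊓ Subgroup.normalizer (B : Set X)⁆ = ⊥) :
    Cardinal.mk A ≤ 3 :=
  stmt7_general A B hAB hAcomm hgen hba bf hbf hbfu hspecial hcomm
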